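/- arXiv:2207.03419 — 2 statements merged into one kernel-verified Lean document; each statement's English description precedes it below -/
import Mathlib

section
/- Let E be a finite directed graph with disjoint cycles (every vertex is the base of at most one cycle). If c and d are cycles in E that share a common vertex, then c and d traverse exactly the same set of vertices; more precisely, d is a rotation of c. -/
/-- A directed graph: vertices, edges, source and range maps. -/
structure DirGraph where
  V : Type
  E : Type
  s : E → V
  r : E → V

namespace DirGraph

variable (G : DirGraph)

/-- A (finite) path, encoded as a list of consecutive edges
(`r eᵢ = s eᵢ₊₁`); the empty list encodes a trivial path. -/
def IsPath (p : List G.E) : Prop := p.Chain' (fun e f => G.r e = G.s f)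

/-- The nontrivial path `p` starts at the vertex `v`. -/
def StartsAt (p : List G.E) (v : G.V) : Prop := ∃ e ∈ p.head?, G.s e = v

/-- The nontrivial path `p` ends at the vertex `v`. -/
def EndsAt (p : List G.E) (v : G.V) : Prop := ∃ e ∈ p.getLast?, G.r e = v

/-- A closed path: a nontrivial path whose range equals its source. -/
def IsClosedPath (p : List G.E) : Prop :=
  p ≠ [] ∧ G.IsPath p ∧ ∀ e ∈ p.getLast?, ∀ f ∈ p.head?, G.r e = G.s f

/-- A cycle: a closed path whose source vertices are pairwise distinct. -/
def IsCycle (p : List G.E) : Prop := G.IsClosedPath p ∧ (p.map G.s).Nodup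

/-- `E` has disjoint cycles: each vertex is the base of at most one cycle. -/
def HasDisjointCycles : Prop :=
  ∀ (v : G.V) (c d : List G.E), G.IsCycle c → G.IsCycle d →
    G.StartsAt c v → G.StartsAt d v → c = d

end DirGraph

/-!
A closed path is exactly a nonempty list of edges that is a `Cycle.Chain` for the incidence
relation `r e = s f`; since `Cycle.Chain` depends only on the list up to rotation, every rotation
of a cycle is again a cycle. Given two cycles through `v`, rotate each so that it starts at `v`:
by disjointness of cycles the two rotations coincide, so `d` is a rotation of `c`, and rotations
have the same source vertices.
-/

namespace DirGraph

variable {G : DirGraph}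

open List

theorem isClosedPath_iff_cycleChain {p : List G.E} :
    G.IsClosedPath p ↔ p ≠ [] ∧ Cycle.Chain (fun e f => G.r e = G.s f) (p : Cycle G.E) := by
  cases p with
  | nil => simp [IsClosedPath]
  | cons a l =>
    rw [Cycle.chain_coe_cons, ← cons_append, isChain_append]
    exact ⟨fun ⟨hne, hp, hcl⟩ => ⟨hne, hp, isChain_singleton a, hcl⟩,
      fun ⟨hne, hp, _, hcl⟩ => ⟨hne, hp, hcl⟩⟩

theorem IsClosedPath.rotate {p : List G.E} (hp : G.IsClosedPath p) (n : ℕ) :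
    G.IsClosedPath (p.rotate n) := by
  rw [isClosedPath_iff_cycleChain] at hp ⊢
  exact ⟨by simpa using hp.1, Cycle.coe_eq_coe.2 (IsRotated.forall p n) ▸ hp.2⟩

theorem IsCycle.rotate {p : List G.E} (hp : G.IsCycle p) (n : ℕ) : G.IsCycle (p.rotate n) :=
  ⟨hp.1.rotate n, by rw [map_rotate]; exact nodup_rotate.2 hp.2⟩

theorem exists_startsAt_rotate {p : List G.E} {v : G.V} (hv : v ∈ p.map G.s) :
    ∃ n, G.StartsAt (p.rotate n) v := by
  obtain ⟨e, he, rfl⟩ := mem_map.1 hv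
  obtain ⟨n, hn, rfl⟩ := mem_iff_getElem.1 he
  exact ⟨n, p[n], by simp [head?_rotate hn], rfl⟩

theorem HasDisjointCycles.isRotated (hdc : G.HasDisjointCycles) {c d : List G.E}
    (hc : G.IsCycle c) (hd : G.IsCycle d) {v : G.V} (hvc : v ∈ c.map G.s)
    (hvd : v ∈ d.map G.s) : c ~r d := by
  obtain ⟨i, hi⟩ := exists_startsAt_rotate hvc
  obtain ⟨j, hj⟩ := exists_startsAt_rotate hvd
  have hij : c.rotate i = d.rotate j := hdc v _ _ (hc.rotate i) (hd.rotate j) hi hj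
  exact (IsRotated.forall c i).symm.trans (hij ▸ IsRotated.forall d j)

end DirGraph

theorem stmt3_general (G : DirGraph)
    (hdc : G.HasDisjointCycles) (c d : List G.E)
    (hc : G.IsCycle c) (hd : G.IsCycle d) (v : G.V)
    (hvc : v ∈ c.map G.s) (hvd : v ∈ d.map G.s) :
    (∀ w : G.V, w ∈ c.map G.s ↔ w ∈ d.map G.s) ∧ ∃ n : ℕ, d = c.rotate n := by
  have hrot : c ~r d := hdc.isRotated hc hd hvc hvd
  refine ⟨fun w => (hrot.map G.s).mem_iff, ?_⟩
  obtain ⟨n, hn⟩ := hrot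
  exact ⟨n, hn.symm⟩

/-- In a finite graph with disjoint cycles, two cycles sharing a vertex
traverse the same set of vertices; more precisely one is a rotation of
the other. -/
theorem stmt3 (G : DirGraph) [Finite G.V] [Finite G.E]
    (hdc : G.HasDisjointCycles) (c d : List G.E)
    (hc : G.IsCycle c) (hd : G.IsCycle d) (v : G.V)
    (hvc : v ∈ c.map G.s) (hvd : v ∈ d.map G.s) :
    (∀ w : G.V, w ∈ c.map G.s ↔ w ∈ d.map G.s) ∧ ∃ n : ℕ, d = c.rotate n :=
  stmt3_general G hdc c d hc hd v hvc hvd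
end

section
/- Let E be a finite directed graph. Define a preorder on E⁰ by v ≤ u iff there exists a path from u to v, and let ≡ be the induced equivalence relation (u ≡ v iff u ≤ v and v ≤ u). If E has disjoint cycles, then each equivalence class of ≡ is either a single vertex or the set of vertices of a single cycle. -/
/-- `v ≤ u`: there is a (possibly trivial) path from `u` to `v`. -/
def DirGraph.Reaches (G : DirGraph) (u v : G.V) : Prop :=
  u = v ∨ ∃ p : List G.E, p ≠ [] ∧ G.IsPath p ∧ G.StartsAt p u ∧ G.EndsAt p v

/-!
If `v` lies on no closed walk, its class is `{v}`. Otherwise, shortcutting repeated vertices of a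
closed walk at `v` yields a cycle at `v` with the same first edge, so with disjoint cycles all
closed walks based at a vertex `x` leave `x` along the same edge. Hence, if `c` is the cycle
through `v`, an edge leaving a vertex of `c` whose range can still reach `v` is an edge of `c`;
following a path from `v` to any vertex of the class edge by edge therefore never leaves `c`.
-/

lemma List.exists_eq_append_cons_append_cons_of_not_nodup_map {α β : Type*} (f : α → β) :
    ∀ {l : List α}, ¬ (l.map f).Nodup → ∃ a x b y c, l = a ++ x :: (b ++ y :: c) ∧ f x = f y
  | [], h => absurd List.nodup_nil h
  | z :: t, h => by
    rw [List.map_cons, List.nodup_cons, not_and_or, not_not] at h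
    rcases h with hz | ht
    · obtain ⟨y, hy, hfy⟩ := List.mem_map.mp hz
      obtain ⟨b, c, rfl⟩ := List.append_of_mem hy
      exact ⟨[], z, b, y, c, rfl, hfy.symm⟩
    · obtain ⟨a, x, b, y, c, rfl, hxy⟩ :=
        List.exists_eq_append_cons_append_cons_of_not_nodup_map f ht
      exact ⟨z :: a, x, b, y, c, rfl, hxy⟩

namespace DirGraph

/-- `StartsAt` forces `p ≠ []`, so trivial walks are excluded. -/
def IsWalk (G : DirGraph) (p : List G.E) (u v : G.V) : Prop :=
  G.IsPath p ∧ G.StartsAt p u ∧ G.EndsAt p v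

variable {G : DirGraph}

lemma isPath_iff {p : List G.E} : G.IsPath p ↔ p.IsChain (fun e f => G.r e = G.s f) := Iff.rfl

lemma StartsAt.ne_nil {p : List G.E} {u : G.V} (h : G.StartsAt p u) : p ≠ [] := by
  rintro rfl; simp [StartsAt] at h

lemma StartsAt.mem_map_s {p : List G.E} {u : G.V} (h : G.StartsAt p u) : u ∈ p.map G.s := by
  obtain ⟨e, he, rfl⟩ := h
  exact List.mem_map_of_mem (List.mem_of_mem_head? he)

lemma StartsAt.of_head?_eq {p q : List G.E} {u : G.V} (hp : G.StartsAt p u)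
    (h : q.head? = p.head?) : G.StartsAt q u := by
  rwa [StartsAt, h]

@[simp] lemma startsAt_cons {e : G.E} {p : List G.E} {u : G.V} :
    G.StartsAt (e :: p) u ↔ G.s e = u := by simp [StartsAt]

lemma IsWalk.ne_nil {p : List G.E} {u v : G.V} (h : G.IsWalk p u v) : p ≠ [] := h.2.1.ne_nil

@[simp] lemma not_isWalk_nil {u v : G.V} : ¬ G.IsWalk [] u v := fun h => h.ne_nil rfl

lemma isWalk_singleton {e : G.E} {u v : G.V} : G.IsWalk [e] u v ↔ G.s e = u ∧ G.r e = v := by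
  simp [IsWalk, isPath_iff, EndsAt]

lemma isWalk_append_iff {a b : List G.E} {u w : G.V} (ha : a ≠ []) (hb : b ≠ []) :
    G.IsWalk (a ++ b) u w ↔ ∃ y, G.IsWalk a u y ∧ G.IsWalk b y w := by
  obtain ⟨x, hx⟩ := Option.isSome_iff_exists.mp (List.getLast?_isSome.mpr ha)
  obtain ⟨y', hy'⟩ := Option.isSome_iff_exists.mp (List.getLast?_isSome.mpr hb)
  obtain ⟨x', a, rfl⟩ := List.exists_cons_of_ne_nil ha
  obtain ⟨y, b, rfl⟩ := List.exists_cons_of_ne_nil hb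
  simp only [IsWalk, isPath_iff, List.isChain_append, StartsAt, EndsAt, List.head?_append,
    List.getLast?_append, hx, hy', List.head?_cons, Option.or_some, Option.mem_def, Option.some.injEq,
    forall_eq', exists_eq_left', Option.getD_some]
  constructor
  · rintro ⟨⟨ha, hb, hab⟩, hu, hw⟩
    exact ⟨_, ⟨ha, hu, rfl⟩, hb, hab.symm, hw⟩
  · rintro ⟨_, ⟨ha, hu, rfl⟩, hb, hab, hw⟩
    exact ⟨⟨ha, hb, hab.symm⟩, hu, hw⟩

lemma isWalk_cons_iff {e : G.E} {p : List G.E} {u w : G.V} :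
    G.IsWalk (e :: p) u w ↔ G.s e = u ∧ (p = [] ∧ G.r e = w ∨ G.IsWalk p (G.r e) w) := by
  rcases eq_or_ne p [] with rfl | hp
  · simp [isWalk_singleton]
  rw [← List.singleton_append, isWalk_append_iff (List.cons_ne_nil _ _) hp]
  simp only [isWalk_singleton, hp, false_and, false_or]
  constructor
  · rintro ⟨_, ⟨hu, rfl⟩, hpw⟩
    exact ⟨hu, hpw⟩
  · rintro ⟨hu, hpw⟩
    exact ⟨_, ⟨hu, rfl⟩, hpw⟩

lemma IsWalk.cons {e : G.E} {p : List G.E} {w : G.V} (h : G.IsWalk p (G.r e) w) :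
    G.IsWalk (e :: p) (G.s e) w :=
  isWalk_cons_iff.mpr ⟨rfl, Or.inr h⟩

lemma IsWalk.append {p q : List G.E} {u v w : G.V} (hp : G.IsWalk p u v) (hq : G.IsWalk q v w) :
    G.IsWalk (p ++ q) u w :=
  (isWalk_append_iff hp.ne_nil hq.ne_nil).mpr ⟨v, hp, hq⟩

lemma IsWalk.split {a b : List G.E} {g : G.E} {u w : G.V} (h : G.IsWalk (a ++ g :: b) u w) :
    (a = [] ∧ u = G.s g ∨ G.IsWalk a u (G.s g)) ∧ G.IsWalk (g :: b) (G.s g) w := by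
  rcases eq_or_ne a [] with rfl | ha
  · obtain rfl : G.s g = u := startsAt_cons.mp h.2.1
    exact ⟨Or.inl ⟨rfl, rfl⟩, h⟩
  obtain ⟨y, hay, hgy⟩ := (isWalk_append_iff ha (List.cons_ne_nil _ _)).mp h
  obtain rfl : G.s g = y := startsAt_cons.mp hgy.2.1
  exact ⟨Or.inr hay, hgy⟩

lemma reaches_iff {u v : G.V} : G.Reaches u v ↔ u = v ∨ ∃ p, G.IsWalk p u v :=
  or_congr_right ⟨fun ⟨p, _, hp⟩ => ⟨p, hp⟩, fun ⟨p, hp⟩ => ⟨p, hp.ne_nil, hp⟩⟩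

lemma IsWalk.reaches {p : List G.E} {u v : G.V} (h : G.IsWalk p u v) : G.Reaches u v :=
  reaches_iff.mpr (Or.inr ⟨p, h⟩)

lemma Reaches.trans {u v w : G.V} (huv : G.Reaches u v) (hvw : G.Reaches v w) :
    G.Reaches u w := by
  rcases reaches_iff.mp huv with rfl | ⟨p, hp⟩
  · exact hvw
  rcases reaches_iff.mp hvw with rfl | ⟨q, hq⟩
  · exact huv
  exact (hp.append hq).reaches

lemma Reaches.exists_isWalk_cons {e : G.E} {w : G.V} (h : G.Reaches (G.r e) w) :
    ∃ p, G.IsWalk (e :: p) (G.s e) w := by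
  rcases reaches_iff.mp h with rfl | ⟨p, hp⟩
  · exact ⟨[], isWalk_singleton.mpr ⟨rfl, rfl⟩⟩
  · exact ⟨p, hp.cons⟩

lemma IsWalk.reaches_of_mem {c : List G.E} {u w x : G.V} (hc : G.IsWalk c u w)
    (hx : x ∈ c.map G.s) : G.Reaches u x ∧ G.Reaches x w := by
  obtain ⟨g, hg, rfl⟩ := List.mem_map.mp hx
  obtain ⟨a, b, rfl⟩ := List.append_of_mem hg
  obtain ⟨⟨-, rfl⟩ | ha, hb⟩ := hc.split
  · exact ⟨Or.inl rfl, hb.reaches⟩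
  · exact ⟨ha.reaches, hb.reaches⟩

lemma IsWalk.exists_rotate {c : List G.E} {v : G.V} {g : G.E} (hc : G.IsWalk c v v) (hg : g ∈ c) :
    ∃ W, G.IsWalk W (G.s g) (G.s g) ∧ W.head? = some g := by
  obtain ⟨a, b, rfl⟩ := List.append_of_mem hg
  obtain ⟨⟨-, rfl⟩ | ha, hb⟩ := hc.split
  · exact ⟨g :: b, hb, rfl⟩
  · exact ⟨(g :: b) ++ a, hb.append ha, rfl⟩

lemma IsWalk.r_mem_map_s {c : List G.E} {v : G.V} {g : G.E} (hc : G.IsWalk c v v) (hg : g ∈ c) :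
    G.r g ∈ c.map G.s := by
  obtain ⟨a, b, rfl⟩ := List.append_of_mem hg
  rcases isWalk_cons_iff.mp hc.split.2 with ⟨-, ⟨-, hgv⟩ | hb⟩
  · exact hgv ▸ hc.2.1.mem_map_s
  · exact List.map_subset _ (List.subset_append_of_subset_right _ (List.subset_cons_self _ _))
      hb.2.1.mem_map_s

lemma IsWalk.isCycle {c : List G.E} {x : G.V} (hc : G.IsWalk c x x) (hnd : (c.map G.s).Nodup) :
    G.IsCycle c := by
  refine ⟨⟨hc.ne_nil, hc.1, fun e he f hf => ?_⟩, hnd⟩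
  obtain ⟨f', hf', rfl⟩ := hc.2.1
  obtain ⟨e', he', hx⟩ := hc.2.2
  rw [Option.mem_unique he he', Option.mem_unique hf hf', hx]

lemma IsCycle.isWalk {c : List G.E} {x : G.V} (hc : G.IsCycle c) (hx : G.StartsAt c x) :
    G.IsWalk c x x := by
  refine ⟨hc.1.2.1, hx, ?_⟩
  obtain ⟨f, hf, rfl⟩ := hx
  obtain ⟨e, he⟩ := Option.isSome_iff_exists.mp (List.getLast?_isSome.mpr hc.1.1)
  exact ⟨e, he, hc.1.2.2 e he f hf⟩

/-- Shortcutting a repeated vertex keeps the first edge, so induction on the length ends at a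
cycle. -/
lemma IsWalk.exists_isCycle_head?_eq {W : List G.E} {x : G.V} (hW : G.IsWalk W x x) :
    ∃ c, G.IsCycle c ∧ c.head? = W.head? := by
  induction hn : W.length using Nat.strong_induction_on generalizing W with
  | _ n ih =>
  by_cases hnd : (W.map G.s).Nodup
  · exact ⟨W, hW.isCycle hnd, rfl⟩
  obtain ⟨a, e, b, f, c, rfl, hef⟩ :=
    List.exists_eq_append_cons_append_cons_of_not_nodup_map G.s hnd
  obtain ⟨hax, hefc⟩ := hW.split
  rw [← List.cons_append] at hefc
  obtain ⟨y, heb, hfc⟩ := (isWalk_append_iff (List.cons_ne_nil _ _) (List.cons_ne_nil _ _)).mp hefc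
  obtain rfl : G.s f = y := startsAt_cons.mp hfc.2.1
  rcases hax with ⟨rfl, rfl⟩ | ha
  · rw [← hef] at heb
    obtain ⟨d, hd, hde⟩ := ih _ (by simp [← hn]) heb rfl
    exact ⟨d, hd, by simpa using hde⟩
  · rw [hef] at ha
    obtain ⟨d, hd, hdW⟩ := ih _ (by simp [← hn]) (ha.append hfc) rfl
    exact ⟨d, hd, by simpa [List.head?_append_of_ne_nil _ ha.ne_nil] using hdW⟩

lemma HasDisjointCycles.head?_eq (hdc : G.HasDisjointCycles) {W₁ W₂ : List G.E} {x : G.V}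
    (h₁ : G.IsWalk W₁ x x) (h₂ : G.IsWalk W₂ x x) : W₁.head? = W₂.head? := by
  obtain ⟨c₁, hc₁, hh₁⟩ := h₁.exists_isCycle_head?_eq
  obtain ⟨c₂, hc₂, hh₂⟩ := h₂.exists_isCycle_head?_eq
  rw [← hh₁, ← hh₂, hdc x c₁ c₂ hc₁ hc₂ (h₁.2.1.of_head?_eq hh₁) (h₂.2.1.of_head?_eq hh₂)]

/-- The only edge out of a vertex `x` of a closed walk `c` that can lead back to `x` is the edge
that `c` itself takes from `x`. -/
lemma HasDisjointCycles.r_mem_map_s (hdc : G.HasDisjointCycles) {c : List G.E} {v : G.V}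
    (hc : G.IsWalk c v v) {e : G.E} (he : G.s e ∈ c.map G.s) (hr : G.Reaches (G.r e) v) :
    G.r e ∈ c.map G.s := by
  obtain ⟨g, hg, hge⟩ := List.mem_map.mp he
  obtain ⟨W, hW, hWg⟩ := hc.exists_rotate hg
  obtain ⟨p, hp⟩ := (hr.trans (hc.reaches_of_mem he).1).exists_isWalk_cons
  rw [← hge] at hp
  obtain rfl : e = g := Option.some_injective _ ((hdc.head?_eq hp hW).trans hWg)
  exact hc.r_mem_map_s hg

lemma HasDisjointCycles.mem_map_s_of_reaches (hdc : G.HasDisjointCycles) {c : List G.E}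
    {v : G.V} (hc : G.IsWalk c v v) {x y : G.V} (hx : x ∈ c.map G.s) (hxy : G.Reaches x y)
    (hyv : G.Reaches y v) : y ∈ c.map G.s := by
  rcases reaches_iff.mp hxy with rfl | ⟨p, hp⟩
  · exact hx
  induction p generalizing x with
  | nil => exact absurd hp not_isWalk_nil
  | cons e p ih =>
    obtain ⟨rfl, ⟨-, rfl⟩ | hp⟩ := isWalk_cons_iff.mp hp
    · exact hdc.r_mem_map_s hc hx hyv
    · exact ih (hdc.r_mem_map_s hc hx (hp.reaches.trans hyv)) hp.reaches hp

end DirGraph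

theorem stmt5_general (G : DirGraph)
    (hdc : G.HasDisjointCycles) (v : G.V) :
    ({u : G.V | G.Reaches u v ∧ G.Reaches v u} = {v}) ∨
      ∃ c : List G.E, G.IsCycle c ∧
        {u : G.V | G.Reaches u v ∧ G.Reaches v u} = {w : G.V | w ∈ c.map G.s} := by
  by_cases hv : ∃ W, G.IsWalk W v v
  · obtain ⟨W, hW⟩ := hv
    obtain ⟨c, hc, hcW⟩ := hW.exists_isCycle_head?_eq
    have hcv : G.IsWalk c v v := hc.isWalk (hW.2.1.of_head?_eq hcW)
    refine Or.inr ⟨c, hc, Set.ext fun w => ⟨fun ⟨hwv, hvw⟩ => ?_, fun hw => ?_⟩⟩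
    · exact hdc.mem_map_s_of_reaches hcv hcv.2.1.mem_map_s hvw hwv
    · exact (hcv.reaches_of_mem hw).symm
  · refine Or.inl (Set.eq_singleton_iff_unique_mem.mpr ⟨⟨Or.inl rfl, Or.inl rfl⟩, ?_⟩)
    rintro u ⟨huv, hvu⟩
    rcases DirGraph.reaches_iff.mp huv with h | ⟨p, hp⟩
    · exact h
    rcases DirGraph.reaches_iff.mp hvu with h | ⟨q, hq⟩
    · exact h.symm
    exact absurd ⟨q ++ p, hq.append hp⟩ hv

/-- In a finite graph with disjoint cycles, each equivalence class of the
relation `u ≡ v ↔ (u ≤ v ∧ v ≤ u)` is either a single vertex or the set of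
vertices of a single cycle. -/
theorem stmt5 (G : DirGraph) [Finite G.V] [Finite G.E]
    (hdc : G.HasDisjointCycles) (v : G.V) :
    ({u : G.V | G.Reaches u v ∧ G.Reaches v u} = {v}) ∨
      ∃ c : List G.E, G.IsCycle c ∧
        {u : G.V | G.Reaches u v ∧ G.Reaches v u} = {w : G.V | w ∈ c.map G.s} :=
  stmt5_general G hdc v
end
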